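/- Let n, m be positive integers, σ, b, b* > 0, and let D ∈ ℝ^{n×m} be a matrix each of whose columns has Euclidean norm 1. Let f(x,z) = (1/(2σ²)) · ‖Dz − x‖₂² + (1/b) · ‖z‖₁, fix x ∈ ℝⁿ and z* ∈ ℝᵐ, and let q(z) = (2b*)^{−m} · exp(−‖z − z*‖₁/b*). Then ∫_{ℝᵐ} f(x,z) · q(z) dz ≤ f(x,z*) + m·(b*)²/σ² + m·(b*/b). -/

import Mathlib

open MeasureTheory Real Finset Set

noncomputable def lap (bs : ℝ) (t : ℝ) : ℝ := (2 * bs)⁻¹ * Real.exp (-|t| / bs)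

lemma lap_nonneg {bs : ℝ} (hbs : 0 < bs) (t : ℝ) : 0 ≤ lap bs t := by
  unfold lap; positivity

lemma lap_neg (bs t : ℝ) : lap bs (-t) = lap bs t := by simp [lap]

lemma continuous_lap (bs : ℝ) : Continuous (lap bs) := by
  unfold lap
  exact continuous_const.mul (Real.continuous_exp.comp ((continuous_abs.neg).div_const bs))

lemma integrable_comp_abs' {f : ℝ → ℝ} (hf : IntegrableOn f (Ioi 0)) :
    Integrable (fun x => f |x|) := by
  have hf' : IntegrableOn (fun x => f |x|) (Ioi 0) :=
    hf.congr_fun (fun x hx => by rw [abs_of_pos hx]) measurableSet_Ioi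
  have hIic : IntegrableOn (fun x => f |x|) (Iic 0) := by
    rw [← Measure.map_neg_eq_self (volume : Measure ℝ)]
    have m : MeasurableEmbedding fun x : ℝ => -x := (Homeomorph.neg ℝ).measurableEmbedding
    rw [m.integrableOn_map_iff]
    simp_rw [Function.comp_def, abs_neg, neg_preimage, neg_Iic, neg_zero]
    exact Iff.mpr integrableOn_Ici_iff_integrableOn_Ioi hf'
  have := hIic.union hf'
  rwa [Set.Iic_union_Ioi, integrableOn_univ] at this

lemma intOn_pow_exp (k : ℕ) {bs : ℝ} (hbs : 0 < bs) :
    IntegrableOn (fun t : ℝ => t ^ k * ((2 * bs)⁻¹ * Real.exp (-(bs⁻¹ * t)))) (Ioi 0) := by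
  have h := integrableOn_rpow_mul_exp_neg_mul_rpow (p := 1) (s := (k : ℝ)) (b := bs⁻¹)
    (lt_of_lt_of_le neg_one_lt_zero (Nat.cast_nonneg k)) one_pos (by positivity)
  have h2 : IntegrableOn (fun t : ℝ => t ^ k * Real.exp (-(bs⁻¹ * t))) (Ioi 0) := by
    refine h.congr_fun (fun t ht => ?_) measurableSet_Ioi
    beta_reduce
    rw [rpow_one, rpow_natCast, neg_mul]
  have h3 : IntegrableOn (fun t : ℝ => (2 * bs)⁻¹ * (t ^ k * Real.exp (-(bs⁻¹ * t)))) (Ioi 0) :=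
    h2.const_mul (2 * bs)⁻¹
  exact IntegrableOn.congr_fun h3 (fun t _ => by ring) measurableSet_Ioi

lemma integral_pow_exp (k : ℕ) {bs : ℝ} (hbs : 0 < bs) :
    ∫ t in Ioi (0:ℝ), t ^ k * Real.exp (-(bs⁻¹ * t)) = (k.factorial : ℝ) * bs ^ (k + 1) := by
  have h := Real.integral_rpow_mul_exp_neg_mul_Ioi (a := (k : ℝ) + 1) (r := bs⁻¹)
    (by positivity) (by positivity)
  rw [add_sub_cancel_right] at h
  have heq : ∫ t in Ioi (0:ℝ), t ^ (k:ℝ) * Real.exp (-(bs⁻¹ * t))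
      = ∫ t in Ioi (0:ℝ), t ^ k * Real.exp (-(bs⁻¹ * t)) := by
    refine setIntegral_congr_fun measurableSet_Ioi (fun t _ => ?_)
    rw [rpow_natCast]
  rw [heq] at h
  rw [h, one_div, inv_inv]
  have : Real.Gamma ((k:ℝ) + 1) = (k.factorial : ℝ) := by
    exact_mod_cast Real.Gamma_nat_eq_factorial k
  rw [this]
  rw [Real.rpow_add hbs]
  simp only [Real.rpow_one, Real.rpow_natCast]
  ring

lemma integrable_pow_lap (k : ℕ) {bs : ℝ} (hbs : 0 < bs) :
    Integrable (fun t : ℝ => |t| ^ k * lap bs t) := by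
  have : (fun t : ℝ => |t| ^ k * lap bs t)
      = fun t => (fun s : ℝ => s ^ k * ((2 * bs)⁻¹ * Real.exp (-(bs⁻¹ * s)))) |t| := by
    funext t
    simp only [lap]
    rw [neg_div, div_eq_inv_mul]
  rw [this]
  exact integrable_comp_abs' (intOn_pow_exp k hbs)

lemma integral_pow_lap (k : ℕ) {bs : ℝ} (hbs : 0 < bs) :
    ∫ t : ℝ, |t| ^ k * lap bs t = (k.factorial : ℝ) * bs ^ k := by
  have : (fun t : ℝ => |t| ^ k * lap bs t)
      = fun t => (fun s : ℝ => s ^ k * ((2 * bs)⁻¹ * Real.exp (-(bs⁻¹ * s)))) |t| := by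
    funext t
    simp only [lap]
    rw [neg_div, div_eq_inv_mul]
  rw [this,
    integral_comp_abs (f := fun s : ℝ => s ^ k * ((2 * bs)⁻¹ * Real.exp (-(bs⁻¹ * s))))]
  have : ∫ t in Ioi (0:ℝ), t ^ k * ((2 * bs)⁻¹ * Real.exp (-(bs⁻¹ * t)))
      = (2 * bs)⁻¹ * ∫ t in Ioi (0:ℝ), t ^ k * Real.exp (-(bs⁻¹ * t)) := by
    rw [← integral_const_mul]
    exact setIntegral_congr_fun measurableSet_Ioi (fun t _ => by ring)
  rw [this, integral_pow_exp k hbs]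
  field_simp
  ring

lemma integrable_lap {bs : ℝ} (hbs : 0 < bs) : Integrable (lap bs) := by
  have := integrable_pow_lap 0 hbs
  simpa using this

lemma integral_lap {bs : ℝ} (hbs : 0 < bs) : ∫ t : ℝ, lap bs t = 1 := by
  have := integral_pow_lap 0 hbs
  simpa using this

lemma integrable_id_lap {bs : ℝ} (hbs : 0 < bs) : Integrable (fun t : ℝ => t * lap bs t) := by
  refine (integrable_pow_lap 1 hbs).mono' ?_ ?_
  · exact (continuous_id.mul (continuous_lap bs)).aestronglyMeasurable
  · refine Filter.Eventually.of_forall fun t => ?_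
    rw [Real.norm_eq_abs, abs_mul, abs_of_nonneg (lap_nonneg hbs t), pow_one]

lemma integral_id_lap {bs : ℝ} (hbs : 0 < bs) : ∫ t : ℝ, t * lap bs t = 0 := by
  have h : ∫ t : ℝ, (-t) * lap bs (-t) = ∫ t : ℝ, t * lap bs t :=
    integral_neg_eq_self (fun t : ℝ => t * lap bs t) volume
  simp only [lap_neg, neg_mul] at h
  rw [integral_neg] at h
  linarith

lemma integrable_sq_lap {bs : ℝ} (hbs : 0 < bs) :
    Integrable (fun t : ℝ => t * (t * lap bs t)) := by
  have := integrable_pow_lap 2 hbs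
  refine this.congr ?_
  refine Filter.Eventually.of_forall fun t => ?_
  show |t| ^ 2 * lap bs t = t * (t * lap bs t)
  rw [sq_abs]; ring

lemma integral_sq_lap {bs : ℝ} (hbs : 0 < bs) :
    ∫ t : ℝ, t * (t * lap bs t) = 2 * bs ^ 2 := by
  have h : (fun t : ℝ => t * (t * lap bs t)) = fun t => |t| ^ 2 * lap bs t := by
    funext t; rw [sq_abs]; ring
  rw [h, integral_pow_lap 2 hbs]
  norm_num

lemma integrable_abs_add_lap {bs : ℝ} (hbs : 0 < bs) (c : ℝ) :
    Integrable (fun t : ℝ => (c + |t|) * lap bs t) := by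
  have h : (fun t : ℝ => (c + |t|) * lap bs t)
      = fun t => c * lap bs t + |t| ^ 1 * lap bs t := by
    funext t; ring
  rw [h]
  exact ((integrable_lap hbs).const_mul c).add (integrable_pow_lap 1 hbs)

lemma integral_abs_add_lap {bs : ℝ} (hbs : 0 < bs) (c : ℝ) :
    ∫ t : ℝ, (c + |t|) * lap bs t = c + bs := by
  have h : (fun t : ℝ => (c + |t|) * lap bs t)
      = fun t => c * lap bs t + |t| ^ 1 * lap bs t := by
    funext t; ring
  rw [h, integral_add ((integrable_lap hbs).const_mul c) (integrable_pow_lap 1 hbs),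
    integral_const_mul, integral_lap hbs, integral_pow_lap 1 hbs]
  norm_num




section Multi

variable {m : ℕ} {bs : ℝ}

lemma intP (hbs : 0 < bs) :
    Integrable (fun u : Fin m → ℝ => ∏ l, lap bs (u l)) :=
  Integrable.fintype_prod (fun _ => integrable_lap hbs)

lemma iP (hbs : 0 < bs) : ∫ u : Fin m → ℝ, ∏ l, lap bs (u l) = 1 := by
  rw [integral_fintype_prod_volume_eq_prod (f := fun _ : Fin m => lap bs)]
  simp [integral_lap hbs]

lemma mono1_int (hbs : 0 < bs) (i : Fin m) :
    Integrable (fun u : Fin m → ℝ => u i * ∏ l, lap bs (u l)) := by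
  set φ : Fin m → ℝ → ℝ := fun l t => (if l = i then t else 1) * lap bs t with hφ
  have h : (fun u : Fin m → ℝ => u i * ∏ l, lap bs (u l))
      = fun u => ∏ l, φ l (u l) := by
    funext u
    simp only [hφ]
    rw [Finset.prod_mul_distrib, Fintype.prod_ite_eq' i (fun l => u l)]
  rw [h]
  refine Integrable.fintype_prod (f := φ) fun l => ?_
  simp only [hφ]
  by_cases hl : l = i
  · simpa [hl] using integrable_id_lap hbs
  · simpa [hl] using integrable_lap hbs

lemma mono1_val (hbs : 0 < bs) (i : Fin m) :
    ∫ u : Fin m → ℝ, u i * ∏ l, lap bs (u l) = 0 := by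
  set φ : Fin m → ℝ → ℝ := fun l t => (if l = i then t else 1) * lap bs t with hφ
  have h : (fun u : Fin m → ℝ => u i * ∏ l, lap bs (u l))
      = fun u => ∏ l, φ l (u l) := by
    funext u
    simp only [hφ]
    rw [Finset.prod_mul_distrib, Fintype.prod_ite_eq' i (fun l => u l)]
  rw [h, integral_fintype_prod_volume_eq_prod (f := φ)]
  refine Finset.prod_eq_zero (Finset.mem_univ i) ?_
  simpa [hφ] using integral_id_lap hbs

lemma mono2_int (hbs : 0 < bs) (i k : Fin m) :
    Integrable (fun u : Fin m → ℝ => u i * (u k * ∏ l, lap bs (u l))) := by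
  set φ : Fin m → ℝ → ℝ :=
    fun l t => (if l = i then t else 1) * ((if l = k then t else 1) * lap bs t) with hφ
  have h : (fun u : Fin m → ℝ => u i * (u k * ∏ l, lap bs (u l)))
      = fun u => ∏ l, φ l (u l) := by
    funext u
    simp only [hφ]
    rw [Finset.prod_mul_distrib, Finset.prod_mul_distrib,
      Fintype.prod_ite_eq' i (fun l => u l), Fintype.prod_ite_eq' k (fun l => u l)]
  rw [h]
  refine Integrable.fintype_prod (f := φ) fun l => ?_
  simp only [hφ]
  by_cases hli : l = i <;> by_cases hlk : l = k
  · subst hli; subst hlk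
    simpa using integrable_sq_lap hbs
  · subst hli
    simpa [hlk] using integrable_id_lap hbs
  · subst hlk
    simpa [hli] using integrable_id_lap hbs
  · simpa [hli, hlk] using integrable_lap hbs

lemma mono2_val (hbs : 0 < bs) (i k : Fin m) :
    ∫ u : Fin m → ℝ, u i * (u k * ∏ l, lap bs (u l))
      = if i = k then 2 * bs ^ 2 else 0 := by
  set φ : Fin m → ℝ → ℝ :=
    fun l t => (if l = i then t else 1) * ((if l = k then t else 1) * lap bs t) with hφ
  have h : (fun u : Fin m → ℝ => u i * (u k * ∏ l, lap bs (u l)))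
      = fun u => ∏ l, φ l (u l) := by
    funext u
    simp only [hφ]
    rw [Finset.prod_mul_distrib, Finset.prod_mul_distrib,
      Fintype.prod_ite_eq' i (fun l => u l), Fintype.prod_ite_eq' k (fun l => u l)]
  rw [h, integral_fintype_prod_volume_eq_prod (f := φ)]
  by_cases hik : i = k
  · subst hik
    rw [if_pos rfl]
    rw [Finset.prod_eq_single_of_mem i (Finset.mem_univ i) ?side]
    · simpa [hφ] using integral_sq_lap hbs
    case side =>
      intro l _ hl
      simpa [hφ, hl] using integral_lap hbs
  · rw [if_neg hik]
    refine Finset.prod_eq_zero (Finset.mem_univ i) ?_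
    have h2 : φ i = fun t => t * lap bs t := by
      funext t; simp [hφ, hik]
    rw [h2]
    exact integral_id_lap hbs

lemma absterm_int (hbs : 0 < bs) (i : Fin m) (c : ℝ) :
    Integrable (fun u : Fin m → ℝ => (c + |u i|) * ∏ l, lap bs (u l)) := by
  set φ : Fin m → ℝ → ℝ := fun l t => (if l = i then c + |t| else 1) * lap bs t with hφ
  have h : (fun u : Fin m → ℝ => (c + |u i|) * ∏ l, lap bs (u l))
      = fun u => ∏ l, φ l (u l) := by
    funext u
    simp only [hφ]
    rw [Finset.prod_mul_distrib, Fintype.prod_ite_eq' i (fun l => c + |u l|)]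
  rw [h]
  refine Integrable.fintype_prod (f := φ) fun l => ?_
  simp only [hφ]
  by_cases hl : l = i
  · simpa [hl] using integrable_abs_add_lap hbs c
  · simpa [hl] using integrable_lap hbs

lemma absterm_val (hbs : 0 < bs) (i : Fin m) (c : ℝ) :
    ∫ u : Fin m → ℝ, (c + |u i|) * ∏ l, lap bs (u l) = c + bs := by
  set φ : Fin m → ℝ → ℝ := fun l t => (if l = i then c + |t| else 1) * lap bs t with hφ
  have h : (fun u : Fin m → ℝ => (c + |u i|) * ∏ l, lap bs (u l))
      = fun u => ∏ l, φ l (u l) := by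
    funext u
    simp only [hφ]
    rw [Finset.prod_mul_distrib, Fintype.prod_ite_eq' i (fun l => c + |u l|)]
  rw [h, integral_fintype_prod_volume_eq_prod (f := φ)]
  rw [Finset.prod_eq_single_of_mem i (Finset.mem_univ i) ?side]
  · simpa [hφ] using integral_abs_add_lap hbs c
  case side =>
    intro l _ hl
    simpa [hφ, hl] using integral_lap hbs

end Multi




/-- Upper bound on the expected sparse-coding objective under the Laplace approximate
posterior: for `D` with unit-norm columns,
`∫ f(x,z)·q(z) dz ≤ f(x,z*) + m·(b*)²/σ² + m·(b*/b)`. -/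
theorem expected_sparse_coding_objective_le (n m : ℕ) (hn : 0 < n) (hm : 0 < m)
    (σ b bs : ℝ) (hσ : 0 < σ) (hb : 0 < b) (hbs : 0 < bs)
    (D : Matrix (Fin n) (Fin m) ℝ)
    (hD : ∀ i, ∑ j, (D j i) ^ 2 = 1)
    (f : (Fin n → ℝ) → (Fin m → ℝ) → ℝ)
    (hf : ∀ x z, f x z =
      1 / (2 * σ ^ 2) * (∑ j, ((∑ i, D j i * z i) - x j) ^ 2) + (1 / b) * (∑ i, |z i|))
    (x : Fin n → ℝ) (zs : Fin m → ℝ)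
    (q : (Fin m → ℝ) → ℝ)
    (hq : ∀ z, q z = ((2 * bs) ^ m)⁻¹ * Real.exp (-(∑ i, |z i - zs i|) / bs)) :
    ∫ z : Fin m → ℝ, f x z * q z ≤
      f x zs + (m : ℝ) * bs ^ 2 / σ ^ 2 + (m : ℝ) * (bs / b) := by
  set A : Fin n → ℝ := fun j => (∑ i, D j i * zs i) - x j with hA
  have hPnn : ∀ u : Fin m → ℝ, 0 ≤ ∏ l, lap bs (u l) :=
    fun u => Finset.prod_nonneg fun l _ => lap_nonneg hbs _
  -- translation invariance
  have htrans : ∫ z : Fin m → ℝ, f x z * q z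
      = ∫ u : Fin m → ℝ, f x (u + zs) * q (u + zs) :=
    (integral_add_right_eq_self (fun z => f x z * q z) zs).symm
  -- Laplace density factorizes
  have hqP : ∀ u : Fin m → ℝ, q (u + zs) = ∏ l, lap bs (u l) := by
    intro u
    rw [hq]
    simp only [Pi.add_apply, add_sub_cancel_right]
    unfold lap
    rw [Finset.prod_mul_distrib, Finset.prod_const, ← Real.exp_sum]
    congr 1
    · rw [Finset.card_univ, Fintype.card_fin, inv_pow]
    · congr 1
      rw [← Finset.sum_div, ← Finset.sum_neg_distrib]
  -- shifted objective
  have hfshift : ∀ u : Fin m → ℝ, f x (u + zs)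
      = 1 / (2 * σ ^ 2) * (∑ j, (A j + ∑ i, D j i * u i) ^ 2)
        + (1 / b) * (∑ i, |u i + zs i|) := by
    intro u
    have hj : ∀ j, (∑ i, D j i * (u i + zs i)) - x j = A j + ∑ i, D j i * u i := by
      intro j
      simp only [mul_add, Finset.sum_add_distrib, hA]
      ring
    rw [hf]
    simp only [Pi.add_apply, hj]
  -- the dominating function
  set G : (Fin m → ℝ) → ℝ := fun u =>
    1 / (2 * σ ^ 2) * (∑ j, (A j + ∑ i, D j i * u i) ^ 2 * ∏ l, lap bs (u l))
      + (1 / b) * (∑ i, (|zs i| + |u i|) * ∏ l, lap bs (u l)) with hGdef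
  -- expansion of the quadratic terms
  have hTexp : ∀ j : Fin n,
      (fun u : Fin m → ℝ => (A j + ∑ i, D j i * u i) ^ 2 * ∏ l, lap bs (u l))
      = fun u => A j ^ 2 * ∏ l, lap bs (u l)
        + (∑ i, (2 * A j * D j i) * (u i * ∏ l, lap bs (u l)))
        + (∑ i, ∑ k, (D j i * D j k) * (u i * (u k * ∏ l, lap bs (u l)))) := by
    intro j
    funext u
    have h1 : (A j + ∑ i, D j i * u i) ^ 2 * ∏ l, lap bs (u l)
        = A j ^ 2 * ∏ l, lap bs (u l)
          + (2 * A j) * ((∑ i, D j i * u i) * ∏ l, lap bs (u l))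
          + ((∑ i, D j i * u i) * ((∑ k, D j k * u k) * ∏ l, lap bs (u l))) := by ring
    rw [h1]
    congr 1
    · congr 1
      rw [Finset.sum_mul, Finset.mul_sum]
      exact Finset.sum_congr rfl fun i _ => by ring
    · rw [Finset.sum_mul, Finset.sum_mul]
      refine Finset.sum_congr rfl fun i _ => ?_
      rw [Finset.mul_sum]
      refine Finset.sum_congr rfl fun k _ => ?_
      ring
  have hX : ∀ j : Fin n,
      Integrable (fun u : Fin m → ℝ => A j ^ 2 * ∏ l, lap bs (u l)) :=
    fun j => (intP hbs).const_mul _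
  have hY : ∀ j : Fin n, Integrable
      (fun u : Fin m → ℝ => ∑ i, (2 * A j * D j i) * (u i * ∏ l, lap bs (u l))) :=
    fun j => integrable_finset_sum _ fun i _ => (mono1_int hbs i).const_mul _
  have hZ : ∀ j : Fin n, Integrable
      (fun u : Fin m → ℝ =>
        ∑ i, ∑ k, (D j i * D j k) * (u i * (u k * ∏ l, lap bs (u l)))) :=
    fun j => integrable_finset_sum _ fun i _ =>
      integrable_finset_sum _ fun k _ => (mono2_int hbs i k).const_mul _
  have hTint : ∀ j : Fin n,
      Integrable (fun u : Fin m → ℝ =>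
        (A j + ∑ i, D j i * u i) ^ 2 * ∏ l, lap bs (u l)) := by
    intro j
    rw [hTexp j]
    have hXY : Integrable (fun u : Fin m → ℝ => A j ^ 2 * ∏ l, lap bs (u l)
        + ∑ i, (2 * A j * D j i) * (u i * ∏ l, lap bs (u l))) := (hX j).add (hY j)
    exact hXY.add (hZ j)
  have hTval : ∀ j : Fin n,
      ∫ u : Fin m → ℝ, (A j + ∑ i, D j i * u i) ^ 2 * ∏ l, lap bs (u l)
        = A j ^ 2 + (∑ i, D j i ^ 2) * (2 * bs ^ 2) := by
    intro j
    have hXY : Integrable (fun u : Fin m → ℝ => A j ^ 2 * ∏ l, lap bs (u l)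
        + ∑ i, (2 * A j * D j i) * (u i * ∏ l, lap bs (u l))) := (hX j).add (hY j)
    rw [hTexp j, integral_add hXY (hZ j), integral_add (hX j) (hY j),
      integral_const_mul, iP hbs,
      integral_finset_sum _ (fun i (_ : i ∈ Finset.univ) => (mono1_int hbs i).const_mul _),
      integral_finset_sum _ (fun i (_ : i ∈ Finset.univ) =>
        integrable_finset_sum _ fun k _ => (mono2_int hbs i k).const_mul _)]
    simp only [integral_const_mul, mono1_val hbs, mul_zero, Finset.sum_const_zero, add_zero,
      mul_one]
    congr 1
    have hsplit : ∀ i : Fin m,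
        (∑ k, (D j i * D j k) * ∫ u : Fin m → ℝ, u i * (u k * ∏ l, lap bs (u l)))
          = D j i ^ 2 * (2 * bs ^ 2) := by
      intro i
      have h2 : ∀ k : Fin m,
          (D j i * D j k) * (∫ u : Fin m → ℝ, u i * (u k * ∏ l, lap bs (u l)))
            = if i = k then (D j i * D j k) * (2 * bs ^ 2) else 0 := by
        intro k
        rw [mono2_val hbs i k]
        split <;> simp
      rw [Finset.sum_congr rfl fun k _ => h2 k,
        Fintype.sum_ite_eq i (fun k => (D j i * D j k) * (2 * bs ^ 2))]
      ring
    calc (∑ i, ∫ u : Fin m → ℝ, ∑ k, (D j i * D j k) * (u i * (u k * ∏ l, lap bs (u l))))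
        = ∑ i, ∑ k, (D j i * D j k) * ∫ u : Fin m → ℝ, u i * (u k * ∏ l, lap bs (u l)) := by
          refine Finset.sum_congr rfl fun i _ => ?_
          rw [integral_finset_sum _
            (fun k (_ : k ∈ Finset.univ) => (mono2_int hbs i k).const_mul _)]
          exact Finset.sum_congr rfl fun k _ => integral_const_mul _ _
      _ = ∑ i, D j i ^ 2 * (2 * bs ^ 2) := Finset.sum_congr rfl fun i _ => hsplit i
      _ = (∑ i, D j i ^ 2) * (2 * bs ^ 2) := (Finset.sum_mul _ _ _).symm
  -- integrability of G
  have hGint : Integrable G := by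
    rw [hGdef]
    exact ((integrable_finset_sum _ fun j _ => hTint j).const_mul _).add
      ((integrable_finset_sum _ fun i _ => absterm_int hbs i |zs i|).const_mul _)
  -- pointwise bound
  have hle : ∀ u : Fin m → ℝ, f x (u + zs) * q (u + zs) ≤ G u := by
    intro u
    rw [hfshift u, hqP u, hGdef]
    have heq : (1 / (2 * σ ^ 2) * (∑ j, (A j + ∑ i, D j i * u i) ^ 2)
          + (1 / b) * (∑ i, |u i + zs i|)) * ∏ l, lap bs (u l)
        = 1 / (2 * σ ^ 2) * (∑ j, (A j + ∑ i, D j i * u i) ^ 2 * ∏ l, lap bs (u l))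
          + (1 / b) * (∑ i, |u i + zs i| * ∏ l, lap bs (u l)) := by
      rw [add_mul, mul_assoc, mul_assoc, Finset.sum_mul, Finset.sum_mul]
    rw [heq]
    refine add_le_add le_rfl ?_
    refine mul_le_mul_of_nonneg_left ?_ (by positivity)
    refine Finset.sum_le_sum fun i _ => ?_
    refine mul_le_mul_of_nonneg_right ?_ (hPnn u)
    exact (abs_add_le (u i) (zs i)).trans_eq (add_comm _ _)
  -- nonnegativity of integrand
  have hnn : ∀ u : Fin m → ℝ, 0 ≤ f x (u + zs) * q (u + zs) := by
    intro u
    rw [hfshift u, hqP u]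
    refine mul_nonneg ?_ (hPnn u)
    have h1 : (0:ℝ) ≤ 1 / (2 * σ ^ 2) := by positivity
    have h2 : (0:ℝ) ≤ 1 / b := by positivity
    exact add_nonneg (mul_nonneg h1 (Finset.sum_nonneg fun j _ => sq_nonneg _))
      (mul_nonneg h2 (Finset.sum_nonneg fun i _ => abs_nonneg _))
  -- value of ∫ G
  have hGval : ∫ u, G u
      = 1 / (2 * σ ^ 2) * (∑ j, (A j ^ 2 + (∑ i, D j i ^ 2) * (2 * bs ^ 2)))
        + (1 / b) * (∑ i : Fin m, (|zs i| + bs)) := by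
    have hW1 : Integrable (fun u : Fin m → ℝ =>
        1 / (2 * σ ^ 2) * (∑ j, (A j + ∑ i, D j i * u i) ^ 2 * ∏ l, lap bs (u l))) :=
      (integrable_finset_sum _ fun j _ => hTint j).const_mul _
    have hW2 : Integrable (fun u : Fin m → ℝ =>
        (1 / b) * (∑ i, (|zs i| + |u i|) * ∏ l, lap bs (u l))) :=
      (integrable_finset_sum _ fun i _ => absterm_int hbs i |zs i|).const_mul _
    rw [hGdef]
    rw [integral_add hW1 hW2]
    rw [integral_const_mul, integral_const_mul,
      integral_finset_sum _ (fun j (_ : j ∈ Finset.univ) => hTint j),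
      integral_finset_sum _ (fun i (_ : i ∈ Finset.univ) => absterm_int hbs i |zs i|)]
    congr 1
    · congr 1
      exact Finset.sum_congr rfl fun j _ => hTval j
    · congr 1
      exact Finset.sum_congr rfl fun i _ => absterm_val hbs i |zs i|
  -- conclude
  rw [htrans]
  refine le_trans (integral_mono_of_nonneg (Filter.Eventually.of_forall hnn) hGint
    (Filter.Eventually.of_forall hle)) ?_
  rw [hGval, hf]
  have hDD : ∑ j : Fin n, ∑ i : Fin m, D j i ^ 2 = (m : ℝ) := by
    rw [Finset.sum_comm]
    simp [hD]
  have hsum1 : ∑ j : Fin n, (A j ^ 2 + (∑ i, D j i ^ 2) * (2 * bs ^ 2))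
      = (∑ j, A j ^ 2) + (m : ℝ) * (2 * bs ^ 2) := by
    rw [Finset.sum_add_distrib, ← Finset.sum_mul, hDD]
  have hsum2 : ∑ i : Fin m, (|zs i| + bs) = (∑ i, |zs i|) + (m : ℝ) * bs := by
    rw [Finset.sum_add_distrib, Finset.sum_const, Finset.card_univ, Fintype.card_fin,
      nsmul_eq_mul]
  rw [hsum1, hsum2]
  simp only [hA]
  apply le_of_eq
  have hσ' : σ ≠ 0 := ne_of_gt hσ
  have hb' : b ≠ 0 := ne_of_gt hb
  field_simp
  ring
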